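/- arXiv:2205.06734 — 3 statements merged into one kernel-verified Lean document; each statement's English description precedes it below -/
import Mathlib

section
/- The exchange identity holds in the canonical little symmetroid: whenever all compositions are defined, (Γ'₂∘_H Γ'₁)∘_V(Γ₂∘_H Γ₁) = (Γ'₂∘_V Γ₂)∘_H(Γ'₁∘_V Γ₁). -/
open CategoryTheory

/-- The 2-target `t₁(Γ) = α ∘ β ∘ γ⁻¹`. -/
def t1 {G : Type*} [Groupoid G] {x y : G}
    (Γ : (y ⟶ y) × (x ⟶ y) × (x ⟶ x)) : x ⟶ y :=
  Groupoid.inv Γ.2.2 ≫ Γ.2.1 ≫ Γ.1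

/-- Vertical composition `Γ₂ ∘_V Γ₁ = (α₂ ∘ α₁, β₁, γ₂ ∘ γ₁)`. -/
def vcomp {G : Type*} [Groupoid G] {x y : G}
    (Γ₂ Γ₁ : (y ⟶ y) × (x ⟶ y) × (x ⟶ x)) :
    (y ⟶ y) × (x ⟶ y) × (x ⟶ x) :=
  (Γ₁.1 ≫ Γ₂.1, Γ₁.2.1, Γ₁.2.2 ≫ Γ₂.2.2)

/-- Horizontal composition
`Γ₂ ∘_H Γ₁ = (t₁(Γ₂)∘s₁(Γ₂)⁻¹, s₁(Γ₂)∘s₁(Γ₁), t₁(Γ₁)⁻¹∘s₁(Γ₁))`. -/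
def hcomp {G : Type*} [Groupoid G] {x y z : G}
    (Γ₂ : (z ⟶ z) × (y ⟶ z) × (y ⟶ y)) (Γ₁ : (y ⟶ y) × (x ⟶ y) × (x ⟶ x)) :
    (z ⟶ z) × (x ⟶ z) × (x ⟶ x) :=
  (Groupoid.inv Γ₂.2.1 ≫ t1 Γ₂, Γ₁.2.1 ≫ Γ₂.2.1, Γ₁.2.1 ≫ Groupoid.inv (t1 Γ₁))

/-- the exchange identity
`(Γ'₂∘_H Γ'₁)∘_V(Γ₂∘_H Γ₁) = (Γ'₂∘_V Γ₂)∘_H(Γ'₁∘_V Γ₁)`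
whenever all compositions are defined. -/
theorem exchange_identity {G : Type*} [Groupoid G] {x y z : G}
    (Γ₁ Γ'₁ : (y ⟶ y) × (x ⟶ y) × (x ⟶ x))
    (Γ₂ Γ'₂ : (z ⟶ z) × (y ⟶ z) × (y ⟶ y))
    (hv1 : Γ'₁.2.1 = t1 Γ₁) (hv2 : Γ'₂.2.1 = t1 Γ₂) :
    vcomp (hcomp Γ'₂ Γ'₁) (hcomp Γ₂ Γ₁) = hcomp (vcomp Γ'₂ Γ₂) (vcomp Γ'₁ Γ₁) := by
  obtain ⟨a1,b1,c1⟩ := Γ₁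
  obtain ⟨a1',b1',c1'⟩ := Γ'₁
  obtain ⟨a2,b2,c2⟩ := Γ₂
  obtain ⟨a2',b2',c2'⟩ := Γ'₂
  simp only [t1, vcomp, hcomp] at *
  subst hv1 hv2
  refine Prod.ext ?_ (Prod.ext ?_ ?_) <;> simp [Groupoid.inv_eq_inv]
end

section
/- Let G be a countable groupoid with left-invariant family of measures ν^x (weights on the fibers G^x = t⁻¹(x)), meaning (L_γ)_* ν^x = ν^y for every γ: x → y. Then the induced family of measures ν²^β on S^β = t₁⁻¹(β) ⊂ S(G), defined via the bijection S^β ≅ G^{t(β)} × G^{s(β)} as the product measure ν^{t(β)} × ν^{s(β)}, is left-invariant under the symmetroid action: for every transformation Γ: β₁ → β₂ in S(G), (L_Γ)_* ν²^{β₁} = ν²^{β₂}. -/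
open CategoryTheory

/-- The induced measure `ν²^β` on the fiber `S^β ≅ G^{t(β)} × G^{s(β)}` of the
canonical symmetroid, defined as the product measure `ν^{t(β)} × ν^{s(β)}`:
the measure of a subset `A` of the product of fibers is the sum of the product
weights `ν(α)·ν(γ)` over its points.  Here the fiber `G^p = t⁻¹(p)` is encoded
as `Σ z, z ⟶ p`. -/
noncomputable def nu2 {G : Type*} [Groupoid G]
    (ν : ∀ ⦃a b : G⦄, (a ⟶ b) → ENNReal) {p q : G}
    (A : Set ((Σ z : G, z ⟶ p) × (Σ w : G, w ⟶ q))) : ENNReal :=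
  ∑' a : A, ν (a : (Σ z : G, z ⟶ p) × (Σ w : G, w ⟶ q)).1.2 *
    ν (a : (Σ z : G, z ⟶ p) × (Σ w : G, w ⟶ q)).2.2

/-- Left multiplication by the transformation `Γ = (α, β, γ)` of the canonical
symmetroid, read through the identification `S^β ≅ G^{t(β)} × G^{s(β)}`:
`(α', γ') ↦ (α∘α', γ∘γ')`. -/
def Lmap {G : Type*} [Groupoid G] {x y x' y' : G} (α : y ⟶ y') (γ : x ⟶ x') :
    (Σ z : G, z ⟶ y) × (Σ w : G, w ⟶ x) →
      (Σ z : G, z ⟶ y') × (Σ w : G, w ⟶ x') :=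
  fun a => (⟨a.1.1, a.1.2 ≫ α⟩, ⟨a.2.1, a.2.2 ≫ γ⟩)

/-- for a countable groupoid with a left-invariant family of
measures `ν^x` on the fibers `G^x = t⁻¹(x)`, the induced family of measures
`ν²^β` on the fibers `S^β` of the canonical symmetroid, defined via
`S^β ≅ G^{t(β)} × G^{s(β)}` as the product measure, is left-invariant under
the symmetroid action: for every transformation `Γ = (α, β, γ) : β₁ → β₂`,
`(L_Γ)_* ν²^{β₁} = ν²^{β₂}`. -/
theorem symmetroid_measure_left_invariant {G : Type*} [Groupoid G] [Countable G]
    (ν : ∀ ⦃a b : G⦄, (a ⟶ b) → ENNReal)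
    (hinv : ∀ ⦃x y : G⦄ (γ : x ⟶ y) ⦃z : G⦄ (a : z ⟶ x), ν (a ≫ γ) = ν a)
    {x y x' y' : G} (α : y ⟶ y') (β : x ⟶ y) (γ : x ⟶ x')
    (A : Set ((Σ z : G, z ⟶ y') × (Σ w : G, w ⟶ x'))) :
    nu2 ν (Lmap α γ ⁻¹' A) = nu2 ν A := by
  classical
  let e : ((Σ z : G, z ⟶ y) × (Σ w : G, w ⟶ x)) ≃
      ((Σ z : G, z ⟶ y') × (Σ w : G, w ⟶ x')) :=
    { toFun := Lmap α γ
      invFun := Lmap (Groupoid.inv α) (Groupoid.inv γ)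
      left_inv := by
        intro a
        simp [Lmap, Category.assoc]
      right_inv := by
        intro a
        simp [Lmap, Category.assoc] }
  have h1 : nu2 ν (Lmap α γ ⁻¹' A) =
      ∑' a, (Lmap α γ ⁻¹' A).indicator
        (fun a : (Σ z : G, z ⟶ y) × (Σ w : G, w ⟶ x) => ν a.1.2 * ν a.2.2) a := by
    rw [nu2]
    exact tsum_subtype (Lmap α γ ⁻¹' A)
      (fun a : (Σ z : G, z ⟶ y) × (Σ w : G, w ⟶ x) => ν a.1.2 * ν a.2.2)
  have h2 : nu2 ν A =
      ∑' a, A.indicator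
        (fun a : (Σ z : G, z ⟶ y') × (Σ w : G, w ⟶ x') => ν a.1.2 * ν a.2.2) a := by
    rw [nu2]
    exact tsum_subtype A
      (fun a : (Σ z : G, z ⟶ y') × (Σ w : G, w ⟶ x') => ν a.1.2 * ν a.2.2)
  rw [h1, h2, ← e.tsum_eq]
  refine tsum_congr fun a => ?_
  by_cases h : a ∈ Lmap α γ ⁻¹' A
  · rw [Set.indicator_of_mem h, Set.indicator_of_mem (show e a ∈ A from h)]
    simp [e, Lmap, hinv]
  · rw [Set.indicator_of_notMem h, Set.indicator_of_notMem (show e a ∉ A from h)]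
end

section
/- If the functions V_p: Ω×Ω → ℂ satisfy the Dirac–Schwinger–Feynman conditions V_p(j,k)·V_p(k,l) = V_p(j,l) and V_p(j,k) = conj(V_p(k,j)) for all j,k,l, then the function f_K((l,j),(k,m)) = Σ_p V_p(l,j)·conj(V_p(k,m)) is positive-definite on S̃ with respect to vertical composition: for any complex ξ₁,…,ξ_M and elements Γ₁,…,Γ_M with common vertical source pairs, Σ_{j,k over pairs with s₁(Γ_j)=s₁(Γ_k)} ξ_j·conj(ξ_k)·f_K(Γ_j∘_V Γ_k^{-1}) ≥ 0. -/
/-- The canonical symmetroid `S̃` of the pair groupoid on `n` points. -/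
abbrev STilde (n : ℕ) := (Fin n × Fin n) × (Fin n × Fin n)

/-- Vertical composition `((z,y),(x,w)) ∘_V ((z',y'),(x',w')) = ((z,x'),(y',w))`
(defined when `y = z'` and `x = w'`). -/
def vcompS {n : ℕ} (A B : STilde n) : STilde n :=
  ((A.1.1, B.2.1), (B.1.2, A.2.2))

/-- The vertical inverse `((z,y),(x,w))⁻¹ = ((y,z),(w,x))`. -/
def vinvS {n : ℕ} (A : STilde n) : STilde n :=
  ((A.1.2, A.1.1), (A.2.2, A.2.1))

/-- The vertical source `s₁((z,y),(x,w)) = (y,x)`. -/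
def s1S {n : ℕ} (A : STilde n) : Fin n × Fin n := (A.1.2, A.2.1)

/-- The Kraus-type function `f_K((l,j),(k,m)) = Σ_p V_p(l,j)·conj(V_p(k,m))`. -/
noncomputable def fK {n P : ℕ} (V : Fin P → Fin n × Fin n → ℂ) : STilde n → ℂ :=
  fun Γ => ∑ p, V p Γ.1 * (starRingEnd ℂ) (V p Γ.2)

private lemma sum_swap4 {α β γ δ : Type*} [Fintype α] [Fintype β] [Fintype γ] [Fintype δ]
    (f : α → β → γ → δ → ℂ) :
    ∑ p, ∑ s, ∑ j, ∑ k, f p s j k = ∑ j, ∑ k, ∑ p, ∑ s, f p s j k := by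
  have h1 : ∀ p : α, ∑ s, ∑ j, ∑ k, f p s j k = ∑ j, ∑ s, ∑ k, f p s j k :=
    fun p => Finset.sum_comm
  simp only [h1]
  rw [Finset.sum_comm]
  refine Finset.sum_congr rfl fun j _ => ?_
  have h2 : ∀ p : α, ∑ s, ∑ k, f p s j k = ∑ k, ∑ s, f p s j k :=
    fun p => Finset.sum_comm
  simp only [h2]
  exact Finset.sum_comm

/-- if the Kraus functions `V_p` satisfy the
Dirac–Schwinger–Feynman conditions `V_p(j,k)·V_p(k,l) = V_p(j,l)` and
`V_p(j,k) = conj (V_p(k,j))`, then `f_K = Σ_p V_p ⊗ V_p*` is positive-definite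
on `S̃` with respect to vertical composition: the sum over pairs `(j,k)` with
`s₁(Γ_j) = s₁(Γ_k)` of `ξ_j·conj(ξ_k)·f_K(Γ_j ∘_V Γ_k⁻¹)` is a nonnegative
real number. -/
theorem fK_DSF_posdef (n P M : ℕ) (V : Fin P → Fin n × Fin n → ℂ)
    (hmul : ∀ (p : Fin P) (j k l : Fin n), V p (j, k) * V p (k, l) = V p (j, l))
    (hsa : ∀ (p : Fin P) (j k : Fin n), V p (j, k) = (starRingEnd ℂ) (V p (k, j)))
    (ξ : Fin M → ℂ) (Γ : Fin M → STilde n) :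
    ∃ r : ℝ, 0 ≤ r ∧
      (∑ j, ∑ k, if s1S (Γ j) = s1S (Γ k) then
          ξ j * (starRingEnd ℂ) (ξ k) * fK V (vcompS (Γ j) (vinvS (Γ k)))
        else 0) = (r : ℂ) := by
  have hV : ∀ p : Fin P, ∃ ε : Fin n → ℂ, ∀ a b : Fin n,
      V p (a, b) = ε a * (starRingEnd ℂ) (ε b) := by
    intro p
    by_cases h : ∃ a, V p (a, a) ≠ 0
    · obtain ⟨a, _⟩ := h
      refine ⟨fun j => V p (j, a), fun j b => ?_⟩
      rw [← hsa p a b, hmul]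
    · push_neg at h
      refine ⟨fun _ => 0, fun j b => ?_⟩
      have h2 := hmul p j b b
      rw [h b, mul_zero] at h2
      simp [← h2]
  choose ε hε using hV
  set F : Fin P → (Fin n × Fin n) → ℂ := fun p s =>
    ∑ j, if s1S (Γ j) = s then ξ j * ε p (Γ j).1.1 * ε p (Γ j).2.2 else 0 with hF
  refine ⟨∑ p, ∑ s, ‖F p s‖ ^ 2, by positivity, ?_⟩
  have key : ((∑ p, ∑ s, ‖F p s‖ ^ 2 : ℝ) : ℂ)
      = ∑ p, ∑ s, F p s * (starRingEnd ℂ) (F p s) := by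
    push_cast
    refine Finset.sum_congr rfl fun p _ => Finset.sum_congr rfl fun s _ => ?_
    rw [Complex.mul_conj, Complex.normSq_eq_norm_sq]
    norm_cast
  rw [key]
  have expand : ∀ p s, F p s * (starRingEnd ℂ) (F p s)
      = ∑ j, ∑ k, (if s1S (Γ j) = s then ξ j * ε p (Γ j).1.1 * ε p (Γ j).2.2 else 0)
          * (starRingEnd ℂ) (if s1S (Γ k) = s then ξ k * ε p (Γ k).1.1 * ε p (Γ k).2.2 else 0) := by
    intro p s
    rw [hF]
    rw [map_sum, Finset.sum_mul_sum]
  simp only [expand]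
  rw [sum_swap4]
  refine (Finset.sum_congr rfl fun j _ => Finset.sum_congr rfl fun k _ => ?_)
  by_cases h : s1S (Γ j) = s1S (Γ k)
  · simp only [h, if_true]
    have collapse : ∀ p : Fin P,
        (∑ s, (if s1S (Γ k) = s then ξ j * ε p (Γ j).1.1 * ε p (Γ j).2.2 else 0)
          * (starRingEnd ℂ) (if s1S (Γ k) = s then ξ k * ε p (Γ k).1.1 * ε p (Γ k).2.2 else 0))
        = (ξ j * ε p (Γ j).1.1 * ε p (Γ j).2.2)
          * (starRingEnd ℂ) (ξ k * ε p (Γ k).1.1 * ε p (Γ k).2.2) := by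
      intro p
      rw [Finset.sum_eq_single (s1S (Γ k))]
      · simp
      · intro s _ hs
        simp [Ne.symm hs]
      · simp
    simp only [collapse]
    rw [fK, Finset.mul_sum]
    refine Finset.sum_congr rfl fun p _ => ?_
    simp only [vcompS, vinvS]
    rw [hε p (Γ j).1.1 (Γ k).2.2, hε p (Γ k).1.1 (Γ j).2.2]
    simp only [map_mul, Complex.conj_conj]
    ring
  · simp only [h, if_false]
    refine (Finset.sum_eq_zero fun p _ => Finset.sum_eq_zero fun s _ => ?_).symm
    by_cases h1 : s1S (Γ j) = s
    · have h2 : s1S (Γ k) ≠ s := fun hc => h (h1.trans hc.symm)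
      simp [h2]
    · simp [h1]
end
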